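/- arXiv:2010.06643 — 9 statements merged into one kernel-verified Lean document; each statement's English description precedes it below -/
import Mathlib

section
/- For all integers n, x, y with 3 ≤ n and 1 ≤ y ≤ x ≤ n − 2, the count F_n(x,y) satisfies the recurrence F_n(x,y) = Σ_{i=0}^{y−1} F_{n−i−1}(x−i, y) + Σ_{j=0}^{y} F_{n−y−1}(x−y, j). -/
/-- Number of 0s in a bitstring (`false` represents 0, `true` represents 1). -/
def zeros (s : List Bool) : ℕ := s.count false

/-- Length of the longest run of consecutive 0s in a bitstring
(0 if the string has no 0s). -/
def maxrun (s : List Bool) : ℕ := ((s.splitOn true).map List.length).foldr max 0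


/-- `F n x y` is the number of bitstrings of length `n` with exactly `x` 0s
and longest run of 0s exactly `y`. -/
noncomputable def F (n x y : ℕ) : ℕ :=
  Nat.card {s : List Bool // s.length = n ∧ zeros s = x ∧ maxrun s = y}

/-!
Split a bitstring at its first `1`: it is `0^k 1 t` for a unique `k` and `t`, with
`zeros = k + zeros t` and `maxrun = max k (maxrun t)`. Since the string has fewer than `n`
zeros it does contain a `1`, and `maxrun = y` forces `k ≤ y`. For `k < y` the tail must have
`maxrun t = y`, giving the first sum; for `k = y` it must have `maxrun t ≤ y`, giving the
second sum.
-/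

open Finset

abbrev Bitstrings (n x : ℕ) (p : ℕ → Prop) : Type :=
  {s : List Bool // s.length = n ∧ zeros s = x ∧ p (maxrun s)}

instance (n x : ℕ) (p : ℕ → Prop) : Finite (Bitstrings n x p) :=
  ((List.finite_length_eq Bool n).subset fun _ hs => hs.1).to_subtype

lemma F_eq_card_bitstrings (n x y : ℕ) : F n x y = Nat.card (Bitstrings n x (· = y)) := rfl

lemma card_bitstrings_congr {n x : ℕ} {p q : ℕ → Prop} (h : ∀ m, p m ↔ q m) :
    Nat.card (Bitstrings n x p) = Nat.card (Bitstrings n x q) := by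
  simp only [funext fun m => propext (h m)]

section FirstOne

variable (k : ℕ) (t : List Bool)

lemma length_replicate_false_append :
    (List.replicate k false ++ true :: t).length = k + 1 + t.length := by
  simp only [List.length_append, List.length_replicate, List.length_cons]; omega

lemma zeros_replicate_false_append : zeros (List.replicate k false ++ true :: t) = k + zeros t := by
  simp [zeros]

lemma splitOn_true_replicate_false_append :
    (List.replicate k false ++ true :: t).splitOn true = List.replicate k false :: t.splitOn true :=
  List.splitOn_append_cons_self_of_not_mem (by simp) t

lemma maxrun_replicate_false_append :
    maxrun (List.replicate k false ++ true :: t) = max k (maxrun t) := by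
  simp [maxrun, splitOn_true_replicate_false_append]

lemma replicate_false_append_inj {k m : ℕ} {t t' : List Bool}
    (h : List.replicate k false ++ true :: t = List.replicate m false ++ true :: t') :
    k = m ∧ t = t' := by
  have hkm : k = m := by
    have := congrArg (List.splitOn true) h
    simp only [splitOn_true_replicate_false_append, List.cons.injEq, List.replicate_inj] at this
    exact this.1.1
  subst hkm
  exact ⟨rfl, by simpa using h⟩

lemma exists_eq_replicate_false_append {s : List Bool} (h : true ∈ s) :
    ∃ k t, s = List.replicate k false ++ true :: t := by
  obtain ⟨u, t, hu, rfl, -⟩ := List.exists_erase_eq h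
  have hu : ∀ b ∈ u, b = false := fun b hb => by cases b <;> simp_all
  exact ⟨u.length, t, by rw [← List.eq_replicate_of_mem hu]⟩

lemma true_mem_of_zeros_lt_length {s : List Bool} (h : zeros s < s.length) : true ∈ s := by
  by_contra hs
  exact h.ne (List.count_eq_length.2 fun b hb => by cases b <;> simp_all)

end FirstOne

section PrependRun

variable {n x : ℕ} {p : ℕ → Prop}

def prependRun (hx : x < n) :
    (Σ k : Fin (x + 1), Bitstrings (n - k - 1) (x - k) (fun m => p (max k m))) →
      Bitstrings n x p :=
  fun ⟨k, t⟩ =>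
    ⟨List.replicate k false ++ true :: t.1,
      by rw [length_replicate_false_append, t.2.1]; omega,
      by rw [zeros_replicate_false_append, t.2.2.1]; omega,
      by rw [maxrun_replicate_false_append]; exact t.2.2.2⟩

lemma prependRun_bijective (hx : x < n) : Function.Bijective (prependRun (p := p) hx) := by
  constructor
  · rintro ⟨k, t, ht⟩ ⟨k', t', ht'⟩ h
    simp only [prependRun, Subtype.mk.injEq] at h
    obtain ⟨hk, rfl⟩ := replicate_false_append_inj h
    obtain rfl : k = k' := Fin.ext hk
    rfl
  · rintro ⟨s, hlen, hzeros, hrun⟩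
    have hone : true ∈ s := true_mem_of_zeros_lt_length (by omega)
    obtain ⟨k, t, rfl⟩ := exists_eq_replicate_false_append hone
    rw [length_replicate_false_append] at hlen
    rw [zeros_replicate_false_append] at hzeros
    rw [maxrun_replicate_false_append] at hrun
    have hk : k < x + 1 := by omega
    exact ⟨⟨⟨k, hk⟩, t, by simp only; omega, by simp only; omega, hrun⟩, rfl⟩

lemma card_bitstrings_eq_sum (hx : x < n) :
    Nat.card (Bitstrings n x p) =
      ∑ k ∈ range (x + 1),
        Nat.card (Bitstrings (n - k - 1) (x - k) (fun m => p (max k m))) := by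
  rw [← Fin.sum_univ_eq_sum_range
      (fun k => Nat.card (Bitstrings (n - k - 1) (x - k) (fun m => p (max k m)))),
    ← Nat.card_sigma]
  exact (Nat.card_eq_of_bijective _ (prependRun_bijective hx)).symm

end PrependRun

lemma card_bitstrings_le_eq_sum (n x y : ℕ) :
    Nat.card (Bitstrings n x (· ≤ y)) = ∑ j ∈ range (y + 1), F n x j := by
  simp only [F_eq_card_bitstrings]
  rw [← Fin.sum_univ_eq_sum_range (fun j => Nat.card (Bitstrings n x (· = j))),
    ← Nat.card_sigma]
  refine (Nat.card_eq_of_bijective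
    (fun js : Σ j : Fin (y + 1), Bitstrings n x (· = j) =>
      (⟨js.2.1, js.2.2.1, js.2.2.2.1, js.2.2.2.2.trans_le (Nat.lt_succ_iff.1 js.1.2)⟩ :
        Bitstrings n x (· ≤ y))) ⟨?_, ?_⟩).symm
  · rintro ⟨j, s, hs⟩ ⟨j', s', hs'⟩ h
    obtain rfl : s = s' := congrArg Subtype.val h
    obtain rfl : j = j' := Fin.ext (hs.2.2.symm.trans hs'.2.2)
    rfl
  · rintro ⟨s, hlen, hzeros, hrun⟩
    exact ⟨⟨⟨maxrun s, Nat.lt_succ_of_le hrun⟩, s, hlen, hzeros, rfl⟩, rfl⟩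

theorem F_recurrence_general (n x y : ℕ) (hn : 3 ≤ n) (hyx : y ≤ x) (hx : x ≤ n - 2) :
    F n x y = (∑ i ∈ Finset.range y, F (n - i - 1) (x - i) y)
      + ∑ j ∈ Finset.range (y + 1), F (n - y - 1) (x - y) j := by
  have short_run (k : ℕ) (hk : k < y) :
      Nat.card (Bitstrings (n - k - 1) (x - k) (max k · = y)) = F (n - k - 1) (x - k) y :=
    card_bitstrings_congr (q := (· = y)) fun m => by omega
  have full_run : Nat.card (Bitstrings (n - y - 1) (x - y) (max y · = y)) =
      ∑ j ∈ range (y + 1), F (n - y - 1) (x - y) j :=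
    (card_bitstrings_congr fun m => by omega).trans (card_bitstrings_le_eq_sum _ _ y)
  have long_run (k : ℕ) (hk : y < k) :
      Nat.card (Bitstrings (n - k - 1) (x - k) (max k · = y)) = 0 :=
    Nat.card_eq_zero.2 (.inl ⟨fun s => by have : max k (maxrun s.1) = y := s.2.2.2; omega⟩)
  rw [F_eq_card_bitstrings, card_bitstrings_eq_sum (by omega),
    ← sum_range_add_sum_Ico _ (by omega : y + 1 ≤ x + 1), sum_range_succ, full_run,
    sum_congr rfl fun k hk => short_run k (mem_range.1 hk),
    sum_eq_zero (s := Ico _ _) fun k hk => long_run k (mem_Ico.1 hk).1, add_zero]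

theorem F_recurrence (n x y : ℕ) (hn : 3 ≤ n) (hy : 1 ≤ y) (hyx : y ≤ x) (hx : x ≤ n - 2) :
    F n x y = (∑ i ∈ Finset.range y, F (n - i - 1) (x - i) y)
      + ∑ j ∈ Finset.range (y + 1), F (n - y - 1) (x - y) j :=
  F_recurrence_general n x y hn hyx hx
end

section
/- For all integers n, x, y with 1 ≤ y ≤ x ≤ n − 1, the number of bitstrings of length n that start with the bit 0, have exactly x 0s, and have maxrun exactly y equals Σ_{i=1}^{y−1} F_{n−i−1}(x−i, y) + Σ_{j=0}^{y} F_{n−y−1}(x−y, j). -/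
/-!
A bitstring that starts with 0 and contains a 1 factors uniquely as `0^i 1 t` with `i ≥ 1`, and
its longest run of 0s is `max i (maxrun t)`. So `maxrun = y` means either `i < y` and
`maxrun t = y` (the first sum), or `i = y` and `maxrun t ≤ y` (the second sum, split by the value
of `maxrun t`).
-/

def zerosThenOne (i : ℕ) (t : List Bool) : List Bool := List.replicate i false ++ true :: t

@[simp]
theorem length_zerosThenOne (i : ℕ) (t : List Bool) :
    (zerosThenOne i t).length = i + t.length + 1 := by
  simp [zerosThenOne, Nat.add_assoc]

@[simp]
theorem zeros_zerosThenOne (i : ℕ) (t : List Bool) : zeros (zerosThenOne i t) = i + zeros t := by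
  simp [zerosThenOne, zeros]

@[simp]
theorem maxrun_zerosThenOne (i : ℕ) (t : List Bool) :
    maxrun (zerosThenOne i t) = max i (maxrun t) := by
  rw [maxrun, zerosThenOne, List.splitOn_append_cons_self_of_not_mem (by simp)]
  simp [maxrun]

@[simp]
theorem head?_zerosThenOne_eq_some_false {i : ℕ} {t : List Bool} :
    (zerosThenOne i t).head? = some false ↔ i ≠ 0 := by
  cases i <;> simp [zerosThenOne, List.replicate_succ]

theorem zerosThenOne_inj {i j : ℕ} {t u : List Bool} :
    zerosThenOne i t = zerosThenOne j u ↔ i = j ∧ t = u := by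
  refine ⟨fun h => ?_, by rintro ⟨rfl, rfl⟩; rfl⟩
  induction i generalizing j with
  | zero => cases j <;> simp_all [zerosThenOne, List.replicate_succ]
  | succ i ih =>
    cases j with
    | zero => simp [zerosThenOne, List.replicate_succ] at h
    | succ j => simpa using ih (List.cons_injective h)

theorem exists_eq_zerosThenOne_of_zeros_lt {s : List Bool} (h : zeros s < s.length) :
    ∃ i t, s = zerosThenOne i t := by
  induction s with
  | nil => simp at h
  | cons b s ih =>
    cases b
    · obtain ⟨i, t, rfl⟩ := ih (by simpa [zeros] using h)
      exact ⟨i + 1, t, rfl⟩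
    · exact ⟨0, s, rfl⟩

theorem finite_setOf_length_eq_and (n : ℕ) (P : List Bool → Prop) :
    {s : List Bool | s.length = n ∧ P s}.Finite :=
  (List.finite_length_eq Bool n).subset fun _ hs => hs.1

theorem Set.ncard_biUnion_finset {ι α : Type*} {t : Finset ι} {s : ι → Set α}
    (hs : ∀ i ∈ t, (s i).Finite) (h : (t : Set ι).PairwiseDisjoint s) :
    (⋃ i ∈ t, s i).ncard = ∑ i ∈ t, (s i).ncard := by
  rw [← finsum_mem_coe_finset]
  exact t.finite_toSet.ncard_biUnion hs h

theorem F_eq_ncard (n x y : ℕ) :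
    F n x y = {s : List Bool | s.length = n ∧ zeros s = x ∧ maxrun s = y}.ncard :=
  Nat.card_coe_set_eq _

theorem setOf_startZero_eq_biUnion {n x y : ℕ} (hyx : y ≤ x) (hxn : x < n) :
    {s : List Bool | s.length = n ∧ s.head? = some false ∧ zeros s = x ∧ maxrun s = y} =
      ⋃ i ∈ Finset.Icc 1 y, zerosThenOne i ''
        {t | t.length = n - i - 1 ∧ zeros t = x - i ∧ max i (maxrun t) = y} := by
  ext s
  simp only [Set.mem_ofPred_eq, Set.mem_iUnion, Set.mem_image, Finset.mem_Icc, exists_prop]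
  constructor
  · rintro ⟨hlen, hhead, hzeros, hmaxrun⟩
    obtain ⟨i, t, rfl⟩ := exists_eq_zerosThenOne_of_zeros_lt (by omega : zeros s < s.length)
    simp only [length_zerosThenOne, head?_zerosThenOne_eq_some_false, zeros_zerosThenOne,
      maxrun_zerosThenOne] at hlen hhead hzeros hmaxrun
    exact ⟨i, ⟨by omega, by omega⟩, t, ⟨by omega, by omega, hmaxrun⟩, rfl⟩
  · rintro ⟨i, ⟨hi, hiy⟩, t, ⟨hlen, hzeros, hmaxrun⟩, rfl⟩
    simp only [length_zerosThenOne, head?_zerosThenOne_eq_some_false, zeros_zerosThenOne,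
      maxrun_zerosThenOne]
    omega

theorem card_startZero_eq_sum {n x y : ℕ} (hyx : y ≤ x) (hxn : x < n) :
    Nat.card {s : List Bool // s.length = n ∧ s.head? = some false ∧ zeros s = x ∧ maxrun s = y}
      = ∑ i ∈ Finset.Icc 1 y,
          {t : List Bool | t.length = n - i - 1 ∧ zeros t = x - i ∧ max i (maxrun t) = y}.ncard := by
  rw [← Set.coe_ofPred, Nat.card_coe_set_eq, setOf_startZero_eq_biUnion hyx hxn,
    Set.ncard_biUnion_finset]
  · exact Finset.sum_congr rfl fun i _ => Set.ncard_image_of_injective _ fun t u h =>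
      (zerosThenOne_inj.1 h).2
  · exact fun i _ => (finite_setOf_length_eq_and _ _).image _
  · intro i _ j _ hij
    refine Set.disjoint_left.2 ?_
    rintro _ ⟨t, -, rfl⟩ ⟨u, -, h⟩
    exact hij (zerosThenOne_inj.1 h).1.symm

theorem ncard_maxrun_le_eq_sum_F (m x y : ℕ) :
    {t : List Bool | t.length = m ∧ zeros t = x ∧ maxrun t ≤ y}.ncard
      = ∑ j ∈ Finset.range (y + 1), F m x j := by
  have hunion : {t : List Bool | t.length = m ∧ zeros t = x ∧ maxrun t ≤ y} =
      ⋃ j ∈ Finset.range (y + 1), {t | t.length = m ∧ zeros t = x ∧ maxrun t = j} := by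
    ext t
    simp
  rw [hunion, Set.ncard_biUnion_finset]
  · simp only [F_eq_ncard]
  · exact fun j _ => finite_setOf_length_eq_and _ _
  · intro j _ k _ hjk
    exact Set.disjoint_left.2 fun t ht hk => hjk (ht.2.2.symm.trans hk.2.2)

theorem F_startZero_recurrence (n x y : ℕ) (hy : 1 ≤ y) (hyx : y ≤ x) (hx : x ≤ n - 1) :
    Nat.card {s : List Bool // s.length = n ∧ s.head? = some false ∧
        zeros s = x ∧ maxrun s = y}
      = (∑ i ∈ Finset.Icc 1 (y - 1), F (n - i - 1) (x - i) y)
        + ∑ j ∈ Finset.range (y + 1), F (n - y - 1) (x - y) j := by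
  obtain ⟨k, rfl⟩ : ∃ k, y = k + 1 := ⟨y - 1, by omega⟩
  rw [card_startZero_eq_sum hyx (by omega), Finset.sum_Icc_succ_top hy, Nat.add_sub_cancel]
  congr 1
  · refine Finset.sum_congr rfl fun i hi => ?_
    rw [F_eq_ncard]
    congr
    ext t
    simp only [Finset.mem_Icc] at hi
    omega
  · rw [← ncard_maxrun_le_eq_sum_F]
    simp
end

section
/- For all integers n, x, y with 1 ≤ y ≤ x ≤ n − 2, the count S_n(x,y) satisfies the recurrence S_n(x,y) = Σ_{i=1}^{y−1} S_{n−i−1}(x−i, y) + Σ_{j=0}^{y} S_{n−y−1}(x−y, j). -/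
/-- A bitstring is solus if it has no two adjacent 1s. -/
def Solus (s : List Bool) : Prop := s.Chain' fun a b => ¬(a = true ∧ b = true)

/-- `S n x y` is the number of solus bitstrings of length `n` that start with the
bit 0, have exactly `x` 0s, and have longest run of 0s exactly `y`. -/
noncomputable def S (n x y : ℕ) : ℕ :=
  Nat.card {s : List Bool // s.length = n ∧ Solus s ∧ s.head? = some false ∧
    zeros s = x ∧ maxrun s = y}

/-!
A string counted by `S n x y` has `n - x ≥ 2` ones, so it factors uniquely as `0^i 1 t` with
`i ≥ 1`. The solus condition forces `t` not to start with a 1, and `t` contains a 1, so `t` is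
again a solus string starting with 0; it has length `n - i - 1`, `x - i` zeros, and
`maxrun (0^i 1 t) = max i (maxrun t)`. Hence the strings with `i < y` correspond to the `t` with
`maxrun t = y`, and those with `i = y` to the `t` with `maxrun t ≤ y`.
-/

theorem solus_iff_isChain {s : List Bool} :
    Solus s ↔ s.IsChain fun a b => ¬(a = true ∧ b = true) :=
  Iff.rfl

theorem solus_cons_false {s : List Bool} : Solus (false :: s) ↔ Solus s := by
  simp [solus_iff_isChain, List.isChain_cons]

theorem solus_cons_true {s : List Bool} : Solus (true :: s) ↔ s.head? ≠ some true ∧ Solus s := by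
  cases s with
  | nil => simp [solus_iff_isChain]
  | cons b s => cases b <;> simp [solus_iff_isChain, List.isChain_cons]

def block (i : ℕ) (t : List Bool) : List Bool := List.replicate i false ++ true :: t

@[simp] theorem block_zero (t : List Bool) : block 0 t = true :: t := rfl

@[simp] theorem block_succ (i : ℕ) (t : List Bool) : block (i + 1) t = false :: block i t := rfl

theorem length_block (i : ℕ) (t : List Bool) : (block i t).length = i + 1 + t.length := by
  simp [block]; omega

theorem zeros_block (i : ℕ) (t : List Bool) : zeros (block i t) = i + zeros t := by
  simp [zeros, block]

theorem maxrun_block (i : ℕ) (t : List Bool) : maxrun (block i t) = max i (maxrun t) := by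
  simp [maxrun, block, List.splitOn_append_cons_self_of_not_mem]

theorem head?_block_eq_some_false {i : ℕ} {t : List Bool} :
    (block i t).head? = some false ↔ 0 < i := by
  cases i <;> simp

theorem solus_block {i : ℕ} {t : List Bool} :
    Solus (block i t) ↔ t.head? ≠ some true ∧ Solus t := by
  induction i with
  | zero => exact solus_cons_true
  | succ i ih => rw [block_succ, solus_cons_false, ih]

theorem block_inj {i j : ℕ} {t u : List Bool} : block i t = block j u ↔ i = j ∧ t = u := by
  induction i generalizing j with
  | zero => cases j <;> simp
  | succ i ih => cases j <;> simp [ih]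

theorem exists_eq_block {s : List Bool} (h : true ∈ s) : ∃ i t, s = block i t := by
  induction s with
  | nil => simp at h
  | cons b s ih =>
    cases b with
    | true => exact ⟨0, s, rfl⟩
    | false =>
      obtain ⟨i, t, rfl⟩ := ih (by simpa using h)
      exact ⟨i + 1, t, rfl⟩

noncomputable def solusStrings (n x y : ℕ) : Finset (List Bool) :=
  Set.Finite.toFinset
    (s := {s | s.length = n ∧ Solus s ∧ s.head? = some false ∧ zeros s = x ∧ maxrun s = y})
    ((List.finite_length_eq Bool n).subset fun _ hs => hs.1)

theorem mem_solusStrings {n x y : ℕ} {s : List Bool} : s ∈ solusStrings n x y ↔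
    s.length = n ∧ Solus s ∧ s.head? = some false ∧ zeros s = x ∧ maxrun s = y := by
  simp [solusStrings]

theorem S_eq_card_solusStrings (n x y : ℕ) : S n x y = (solusStrings n x y).card := by
  rw [S, ← Nat.card_eq_finsetCard]
  exact Nat.card_congr (Equiv.subtypeEquivRight fun s => mem_solusStrings.symm)

theorem block_mem_solusStrings_iff {n x y i : ℕ} {t : List Bool} :
    block i t ∈ solusStrings n x y ↔ 0 < i ∧ i + 1 + t.length = n ∧ t.head? ≠ some true ∧
      Solus t ∧ i + zeros t = x ∧ max i (maxrun t) = y := by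
  rw [mem_solusStrings, length_block, solus_block, head?_block_eq_some_false, zeros_block,
    maxrun_block]
  tauto

theorem block_mem_solusStrings {n x y i j : ℕ} {t : List Bool} (hi : 0 < i) (hin : i < n)
    (hix : i ≤ x) (hy : max i j = y) (ht : t ∈ solusStrings (n - i - 1) (x - i) j) :
    block i t ∈ solusStrings n x y := by
  obtain ⟨hlen, hsolus, hhead, hzeros, hrun⟩ := mem_solusStrings.mp ht
  exact block_mem_solusStrings_iff.mpr
    ⟨hi, by omega, by simp [hhead], hsolus, by omega, hrun ▸ hy⟩

theorem exists_block_of_mem_solusStrings {n x y : ℕ} {s : List Bool} (hx : x + 2 ≤ n)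
    (hs : s ∈ solusStrings n x y) : ∃ i t, s = block i t ∧ 0 < i ∧ max i (maxrun t) = y ∧
      t ∈ solusStrings (n - i - 1) (x - i) (maxrun t) := by
  obtain ⟨hlen, -, -, hzeros, -⟩ := mem_solusStrings.mp hs
  have hone : true ∈ s := by
    by_contra h
    have : zeros s = s.length := List.count_eq_length.mpr fun b hb => by
      cases b <;> simp_all
    omega
  obtain ⟨i, t, rfl⟩ := exists_eq_block hone
  obtain ⟨hi, hlen', hhead, hsolus, hzeros', hmax⟩ := block_mem_solusStrings_iff.mp hs
  refine ⟨i, t, rfl, hi, hmax, mem_solusStrings.mpr ⟨by omega, hsolus, ?_, by omega, rfl⟩⟩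
  match t, hhead with
  | [], _ => simp [zeros] at hzeros' hlen'; omega
  | false :: _, _ => rfl

theorem S_recurrence (n x y : ℕ) (hy : 1 ≤ y) (hyx : y ≤ x) (hx : x ≤ n - 2) :
    S n x y = (∑ i ∈ Finset.Icc 1 (y - 1), S (n - i - 1) (x - i) y)
      + ∑ j ∈ Finset.range (y + 1), S (n - y - 1) (x - y) j := by
  simp only [S_eq_card_solusStrings]
  rw [← Finset.card_sigma, ← Finset.card_sigma, ← Finset.card_disjSum, eq_comm]
  refine Finset.card_bij (fun p _ => p.elim (fun q => block q.1 q.2) (fun q => block y q.2))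
    ?_ ?_ ?_
  · rintro (⟨i, t⟩ | ⟨j, t⟩) hp
    · simp only [Finset.inl_mem_disjSum, Finset.mem_sigma, Finset.mem_Icc] at hp
      exact block_mem_solusStrings (i := i) (by omega) (by omega) (by omega) (by omega) hp.2
    · simp only [Finset.inr_mem_disjSum, Finset.mem_sigma, Finset.mem_range] at hp
      exact block_mem_solusStrings (by omega) (by omega) hyx (by omega) hp.2
  · -- `block` is injective, and in the second family `j` is recovered as `maxrun t`.
    rintro (⟨i, t⟩ | ⟨j, t⟩) hp (⟨i', t'⟩ | ⟨j', t'⟩) hp' h <;>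
      simp only [Finset.inl_mem_disjSum, Finset.inr_mem_disjSum, Finset.mem_sigma,
        Finset.mem_Icc, Finset.mem_range, mem_solusStrings] at hp hp' <;>
      simp only [Sum.elim_inl, Sum.elim_inr, block_inj] at h <;>
      grind
  · intro s hs
    obtain ⟨i, t, rfl, hi, hmax, ht⟩ := exists_block_of_mem_solusStrings (by omega) hs
    rcases (le_max_left i (maxrun t)).trans_eq hmax |>.lt_or_eq with hiy | rfl
    · refine ⟨.inl ⟨i, t⟩, ?_, rfl⟩
      simp only [Finset.inl_mem_disjSum, Finset.mem_sigma, Finset.mem_Icc]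
      exact ⟨⟨hi, by omega⟩, (show maxrun t = y by omega) ▸ ht⟩
    · refine ⟨.inr ⟨maxrun t, t⟩, ?_, rfl⟩
      simp only [Finset.inr_mem_disjSum, Finset.mem_sigma, Finset.mem_range]
      exact ⟨by omega, ht⟩
end

section
/- For all integers n ≥ 2 and all x, y ≥ 0, the number of solus bitstrings of length n with exactly x 0s and maxrun exactly y equals S_{n−1}(x,y) + S_n(x,y), where S_m(x,y) counts those solus bitstrings of length m with x 0s and maxrun y that start with the bit 0. -/
/-! A solus string of length `n ≥ 2` either starts with 0, and is then counted by `S n`, or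
starts with 1, and is then `1 :: t` for a solus string `t` of length `n - 1` which must start
with 0. Prepending a 1 changes neither the number of 0s nor the runs of 0s. -/

instance List.finite_subtype_length_eq_and {α : Type*} [Finite α] (n : ℕ)
    (p : List α → Prop) :
    Finite {s : List α // s.length = n ∧ p s} :=
  ((List.finite_length_eq α n).subset fun _ hs => hs.1).to_subtype

def Equiv.subtypeSumSubtypeAndNot {α : Type*} (p q : α → Prop) [DecidablePred q] :
    {a // p a} ≃ {a // p a ∧ ¬q a} ⊕ {a // p a ∧ q a} :=
  (Equiv.sumCompl fun a : {a // p a} => q a).symm.trans <| (Equiv.sumComm _ _).trans <|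
    Equiv.sumCongr (subtypeSubtypeEquivSubtypeInter p (¬q ·))
      (subtypeSubtypeEquivSubtypeInter p q)

theorem zeros_true_cons (t : List Bool) : zeros (true :: t) = zeros t := by
  simp [zeros]

theorem maxrun_true_cons (t : List Bool) : maxrun (true :: t) = maxrun t := by
  simp [maxrun, List.splitOn_cons_eq_if_modifyHead]

theorem solus_true_cons {t : List Bool} : Solus (true :: t) ↔ t.head? ≠ some true ∧ Solus t :=
  List.isChain_cons.trans (and_congr_left' (by simp))

theorem List.true_cons_tail {s : List Bool} (hs : s ≠ []) (h : s.head? ≠ some false) :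
    true :: s.tail = s := by
  cases s with
  | nil => contradiction
  | cons b t => cases b <;> simp_all

theorem List.head?_eq_some_false {s : List Bool} (hs : s ≠ []) (h : s.head? ≠ some true) :
    s.head? = some false := by
  cases s with
  | nil => contradiction
  | cons b t => cases b <;> simp_all

theorem length_solus_zeros_maxrun_true_cons_iff (n x y : ℕ) (t : List Bool) :
    ((true :: t).length = n + 2 ∧ Solus (true :: t) ∧ zeros (true :: t) = x ∧
      maxrun (true :: t) = y) ↔
    t.length = n + 1 ∧ Solus t ∧ t.head? = some false ∧ zeros t = x ∧ maxrun t = y := by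
  rw [solus_true_cons, zeros_true_cons, maxrun_true_cons, List.length_cons,
    Nat.add_right_cancel_iff]
  constructor
  · rintro ⟨hlen, ⟨hhead, hsol⟩, hz, hm⟩
    exact ⟨hlen, hsol, List.head?_eq_some_false (List.ne_nil_of_length_eq_add_one hlen) hhead,
      hz, hm⟩
  · rintro ⟨hlen, hsol, hhead, hz, hm⟩
    exact ⟨hlen, ⟨by simp [hhead], hsol⟩, hz, hm⟩

def solusTrueConsEquiv (n x y : ℕ) :
    {t : List Bool // t.length = n + 1 ∧ Solus t ∧ t.head? = some false ∧ zeros t = x ∧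
      maxrun t = y} ≃
    {s : List Bool // (s.length = n + 2 ∧ Solus s ∧ zeros s = x ∧ maxrun s = y) ∧
      s.head? ≠ some false} where
  toFun t := ⟨true :: t.1, (length_solus_zeros_maxrun_true_cons_iff n x y t.1).2 t.2, by simp⟩
  invFun s := ⟨s.1.tail, (length_solus_zeros_maxrun_true_cons_iff n x y _).1 <| by
    rw [List.true_cons_tail (List.ne_nil_of_length_eq_add_one s.2.1.1) s.2.2]
    exact s.2.1⟩
  left_inv _ := rfl
  right_inv s := Subtype.ext (List.true_cons_tail (List.ne_nil_of_length_eq_add_one s.2.1.1) s.2.2)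

theorem solus_count_split (n x y : ℕ) (hn : 2 ≤ n) :
    Nat.card {s : List Bool // s.length = n ∧ Solus s ∧ zeros s = x ∧ maxrun s = y}
      = S (n - 1) x y + S n x y := by
  obtain ⟨n, rfl⟩ := Nat.exists_eq_add_of_le' hn
  rw [S, S, ← Nat.card_sum]
  refine Nat.card_congr <| (Equiv.subtypeSumSubtypeAndNot _ (·.head? = some false)).trans <|
    Equiv.sumCongr (solusTrueConsEquiv n x y).symm (Equiv.subtypeEquivRight fun s => ?_)
  tauto
end

section
/- For all integers n ≥ 3 and y ≥ 0: P_n(n−1, y) = 1 if 2y = n − 1; P_n(n−1, y) = 2 if n − 1 < 2y and y ≤ n − 2; and P_n(n−1, y) = 0 otherwise (in particular P_n(n−1, n−1) = 0). -/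
/-- A bitstring is pinned if it is nonempty and both its first and last bits are 0. -/
def Pinned (s : List Bool) : Prop :=
  s ≠ [] ∧ s.head? = some false ∧ s.getLast? = some false

/-- `P n x y` is the number of pinned bitstrings of length `n` with exactly `x` 0s
and longest run of 0s exactly `y`. -/
noncomputable def P (n x y : ℕ) : ℕ :=
  Nat.card {s : List Bool // s.length = n ∧ Pinned s ∧ zeros s = x ∧ maxrun s = y}

/-! A pinned bitstring of length `m + 1` with `m` zeros has its only `1` strictly inside, so it is
`0^i 1 0^j` with `i, j ≥ 1` and `i + j = m`, and its longest run of zeros is `max i j`. Hence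
`P (m + 1) m y` counts the pairs `(i, j)` of positive integers with `i + j = m` and `max i j = y`:
the single pair `(y, y)` when `2y = m`, the two pairs `(y, m - y)`, `(m - y, y)` when
`m < 2y < 2m`, and none otherwise. -/

open Finset

def oneInZeros (i j : ℕ) : List Bool := List.replicate i false ++ true :: List.replicate j false

@[simp] lemma length_oneInZeros (i j : ℕ) : (oneInZeros i j).length = i + j + 1 := by
  simp [oneInZeros, Nat.add_assoc]

@[simp] lemma zeros_oneInZeros (i j : ℕ) : zeros (oneInZeros i j) = i + j := by
  simp [zeros, oneInZeros]

@[simp] lemma maxrun_oneInZeros (i j : ℕ) : maxrun (oneInZeros i j) = max i j := by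
  have hnot (k : ℕ) : true ∉ List.replicate k false := by simp [List.mem_replicate]
  simp [maxrun, oneInZeros, List.splitOn_append_cons_self_of_not_mem (hnot i),
    List.splitOn_eq_singleton (hnot j)]

lemma head?_oneInZeros (i j : ℕ) :
    (oneInZeros i j).head? = if 0 < i then some false else some true := by
  cases i <;> simp [oneInZeros, List.replicate_succ]

lemma getLast?_oneInZeros (i j : ℕ) :
    (oneInZeros i j).getLast? = if 0 < j then some false else some true := by
  cases j with
  | zero => simp [oneInZeros]
  | succ j =>
    rw [show oneInZeros i (j + 1) = oneInZeros i j ++ [false] by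
      simp [oneInZeros, List.replicate_succ']]
    simp

lemma pinned_oneInZeros_iff (i j : ℕ) : Pinned (oneInZeros i j) ↔ 0 < i ∧ 0 < j := by
  simp [Pinned, ← List.length_pos_iff, head?_oneInZeros, getLast?_oneInZeros, Nat.pos_iff_ne_zero]

lemma idxOf_true_oneInZeros (i j : ℕ) : (oneInZeros i j).idxOf true = i := by
  induction i with
  | zero => simp [oneInZeros]
  | succ i ih => simpa [oneInZeros, List.replicate_succ, List.idxOf_cons] using ih

lemma oneInZeros_injective : Function.Injective (fun p : ℕ × ℕ => oneInZeros p.1 p.2) := by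
  rintro ⟨i, j⟩ ⟨i', j'⟩ h
  have hi : i = i' := by simpa [idxOf_true_oneInZeros] using congrArg (List.idxOf true) h
  have hlen := congrArg List.length h
  simp only [length_oneInZeros] at hlen
  exact Prod.ext hi (by omega)

lemma exists_eq_oneInZeros_of_count_true_eq_one {s : List Bool} (hs : s.count true = 1) :
    ∃ i j, s = oneInZeros i j := by
  induction s with
  | nil => simp at hs
  | cons b t ih =>
    cases b
    · obtain ⟨i, j, rfl⟩ := ih (by simpa using hs)
      exact ⟨i + 1, j, by simp [oneInZeros, List.replicate_succ]⟩
    · refine ⟨0, t.length, ?_⟩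
      simpa [oneInZeros, List.eq_replicate_iff, List.count_eq_zero] using hs

lemma P_succ_self_eq_card (m y : ℕ) :
    P (m + 1) m y = #{p ∈ antidiagonal m | 0 < p.1 ∧ 0 < p.2 ∧ max p.1 p.2 = y} := by
  set F := {p ∈ antidiagonal m | 0 < p.1 ∧ 0 < p.2 ∧ max p.1 p.2 = y}
  have hset : {s : List Bool | s.length = m + 1 ∧ Pinned s ∧ zeros s = m ∧ maxrun s = y} =
      ↑(F.image fun p => oneInZeros p.1 p.2) := by
    ext s
    simp only [Set.mem_ofPred_eq, coe_image, Set.mem_image, mem_coe, F, mem_filter,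
      HasAntidiagonal.mem_antidiagonal, Prod.exists]
    constructor
    · rintro ⟨hlen, hpin, hzeros, hmax⟩
      have hcount : s.count true = 1 := by
        have := List.count_true_add_count_false s
        rw [zeros] at hzeros
        omega
      obtain ⟨i, j, rfl⟩ := exists_eq_oneInZeros_of_count_true_eq_one hcount
      simp only [zeros_oneInZeros, maxrun_oneInZeros, pinned_oneInZeros_iff] at hzeros hmax hpin
      exact ⟨i, j, ⟨hzeros, hpin.1, hpin.2, hmax⟩, rfl⟩
    · rintro ⟨i, j, ⟨rfl, hi, hj, rfl⟩, rfl⟩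
      simp [pinned_oneInZeros_iff, hi, hj]
  calc P (m + 1) m y = Nat.card ↥(F.image fun p => oneInZeros p.1 p.2 : Set (List Bool)) := by
        rw [← hset]; rfl
    _ = #F := by
        rw [Nat.card_coe_set_eq, Set.ncard_coe_finset,
          card_image_of_injective _ oneInZeros_injective]

theorem P_boundary (n y : ℕ) (hn : 3 ≤ n) :
    (2 * y = n - 1 → P n (n - 1) y = 1) ∧
    (n - 1 < 2 * y ∧ y ≤ n - 2 → P n (n - 1) y = 2) ∧
    (¬(2 * y = n - 1) ∧ ¬(n - 1 < 2 * y ∧ y ≤ n - 2) → P n (n - 1) y = 0) ∧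
    P n (n - 1) (n - 1) = 0 := by
  obtain ⟨m, rfl⟩ : ∃ m, n = m + 1 := ⟨n - 1, by omega⟩
  simp only [Nat.add_sub_cancel, P_succ_self_eq_card]
  refine ⟨fun hy => ?_, fun hy => ?_, fun hy => ?_, ?_⟩
  · rw [card_eq_one]
    exact ⟨(y, y), by ext ⟨i, j⟩; simp [HasAntidiagonal.mem_antidiagonal]; omega⟩
  · rw [card_eq_two]
    refine ⟨(y, m - y), (m - y, y), by simp; omega, ?_⟩
    ext ⟨i, j⟩
    simp [HasAntidiagonal.mem_antidiagonal]
    omega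
  all_goals
    rw [card_eq_zero, filter_eq_empty_iff]
    rintro ⟨i, j⟩ hij
    simp only [HasAntidiagonal.mem_antidiagonal] at hij
    omega
end

section
/- For all integers n, x, y with 1 ≤ y ≤ x ≤ n: F_n(x,y) > 0 if and only if (y does not divide x and x + ⌊x/y⌋ ≤ n) or (y divides x and x + x/y − 1 ≤ n). -/
/-!
Cutting a bitstring at its 1s yields its run lengths: a nonempty list of naturals whose sum is
the number of 0s, whose maximum is the longest run and whose length exceeds the number of 1s by
one; conversely every nonempty list is the run-length list of a bitstring. Hence `F n x y > 0`
iff some list of `n - x + 1` naturals has sum `x` and maximum `y`, i.e. iff `x ≤ (n - x + 1) y`,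
which is `⌈x / y⌉ ≤ n - x + 1` written out according to whether `y ∣ x`.
-/

namespace List

variable {α : Type*}

theorem not_mem_of_mem_splitOn [BEq α] [LawfulBEq α] {a : α} {xs l : List α}
    (hl : l ∈ xs.splitOn a) : a ∉ l := by
  induction xs generalizing l with
  | nil => simp_all
  | cons x xs ih =>
    rw [splitOn_cons_eq_if_modifyHead] at hl
    split at hl
    · rcases mem_cons.1 hl with rfl | hl
      · exact not_mem_nil
      · exact ih hl
    · rename_i hx
      obtain ⟨b, bs, hbs⟩ := exists_cons_of_ne_nil (splitOn_ne_nil a xs)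
      rw [hbs, modifyHead_cons] at hl
      rw [hbs] at ih
      rcases mem_cons.1 hl with rfl | hl
      · exact fun h => (mem_cons.1 h).elim (fun e => hx (by simp [e])) (ih mem_cons_self)
      · exact ih (mem_cons_of_mem _ hl)

theorem length_intercalate (sep : List α) (L : List (List α)) :
    (sep.intercalate L).length = (L.map length).sum + sep.length * (L.length - 1) := by
  induction L with
  | nil => simp
  | cons l L ih =>
    cases L with
    | nil => simp
    | cons l' L =>
      rw [intercalate_cons_cons, length_append, length_append, ih]
      simp only [map_cons, sum_cons, length_cons, Nat.add_sub_cancel]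
      cases L.length <;> ring

theorem count_intercalate_singleton [BEq α] [LawfulBEq α] {a b : α} (hab : a ≠ b)
    (L : List (List α)) : ([b].intercalate L).count a = (L.map (count a)).sum := by
  induction L with
  | nil => simp
  | cons l L ih =>
    cases L with
    | nil => simp
    | cons l' L =>
      rw [intercalate_cons_cons, count_append, count_append, ih]
      simp [hab.symm]

theorem exists_length_sum_forall_le {x y k : ℕ} (h : x ≤ k * y) :
    ∃ L : List ℕ, L.length = k ∧ L.sum = x ∧ ∀ a ∈ L, a ≤ y := by
  induction k generalizing x with
  | zero => exact ⟨[], rfl, by simp_all, by simp⟩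
  | succ k ih =>
    obtain ⟨L, hlen, hsum, hle⟩ := ih (x := x - min x y) (by rw [Nat.succ_mul] at h; omega)
    exact ⟨min x y :: L, by simp [hlen], by simp [hsum],
      forall_mem_cons.2 ⟨min_le_right x y, hle⟩⟩

end List

def runs (s : List Bool) : List ℕ := (s.splitOn true).map List.length

def ofRuns (L : List ℕ) : List Bool := [true].intercalate (L.map (List.replicate · false))

theorem runs_ne_nil (s : List Bool) : runs s ≠ [] := by
  simp [runs]

theorem maxrun_eq_foldr_runs (s : List Bool) : maxrun s = (runs s).foldr max 0 := rfl

theorem ofRuns_runs (s : List Bool) : ofRuns (runs s) = s := by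
  have hblocks : ∀ l ∈ s.splitOn true, List.replicate l.length false = l := fun l hl =>
    (List.eq_replicate_iff.2 ⟨rfl, fun b hb => by
      simpa using ne_of_mem_of_not_mem hb (List.not_mem_of_mem_splitOn hl)⟩).symm
  calc ofRuns (runs s) = [true].intercalate ((s.splitOn true).map id) := by
        rw [ofRuns, runs, List.map_map]
        exact congrArg _ (List.map_congr_left hblocks)
    _ = s := by rw [List.map_id, List.intercalate_splitOn]

theorem runs_ofRuns {L : List ℕ} (hL : L ≠ []) : runs (ofRuns L) = L := by
  rw [runs, ofRuns, List.splitOn_intercalate _ (by simp) (by simpa using hL)]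
  simp [Function.comp_def]

theorem zeros_ofRuns (L : List ℕ) : zeros (ofRuns L) = L.sum := by
  rw [zeros, ofRuns, List.count_intercalate_singleton Bool.false_ne_true]
  simp [Function.comp_def]

theorem length_ofRuns (L : List ℕ) : (ofRuns L).length = L.sum + (L.length - 1) := by
  simp [ofRuns, List.length_intercalate, Function.comp_def]

theorem exists_bitstring_iff_exists_runs {n x y : ℕ} :
    (∃ s : List Bool, s.length = n ∧ zeros s = x ∧ maxrun s = y) ↔
      ∃ L : List ℕ, L ≠ [] ∧ L.sum + (L.length - 1) = n ∧ L.sum = x ∧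
        L.foldr max 0 = y := by
  constructor
  · rintro ⟨s, rfl, rfl, rfl⟩
    refine ⟨runs s, runs_ne_nil s, ?_, ?_, rfl⟩
    · rw [← length_ofRuns, ofRuns_runs]
    · rw [← zeros_ofRuns, ofRuns_runs]
  · rintro ⟨L, hL, rfl, rfl, rfl⟩
    exact ⟨ofRuns L, length_ofRuns L, zeros_ofRuns L,
      by rw [maxrun_eq_foldr_runs, runs_ofRuns hL]⟩

theorem exists_runs_iff_le_mul {x y k : ℕ} (hyx : y ≤ x) :
    (∃ L : List ℕ, L.length = k + 1 ∧ L.sum = x ∧ L.foldr max 0 = y) ↔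
      x ≤ (k + 1) * y := by
  constructor
  · rintro ⟨L, hlen, rfl, rfl⟩
    rw [← hlen, ← smul_eq_mul]
    exact List.sum_le_card_nsmul L _ fun a ha => List.le_max_of_le' 0 ha le_rfl
  · intro h
    have hrest : x - y ≤ k * y := by rw [Nat.succ_mul] at h; omega
    obtain ⟨L, hlen, hsum, hle⟩ := List.exists_length_sum_forall_le hrest
    refine ⟨y :: L, by simp [hlen], by simp [hsum]; omega, ?_⟩
    exact max_eq_left (List.max_le_of_forall_le L y hle)

theorem exists_bitstring_iff_le_mul {n x y : ℕ} (hyx : y ≤ x) :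
    (∃ s : List Bool, s.length = n ∧ zeros s = x ∧ maxrun s = y) ↔
      x ≤ n ∧ x ≤ (n - x + 1) * y := by
  rw [exists_bitstring_iff_exists_runs]
  constructor
  · rintro ⟨L, hL, hn, hx, hy⟩
    have hlen : L.length = n - x + 1 := by have := List.length_pos_of_ne_nil hL; omega
    exact ⟨by omega, (exists_runs_iff_le_mul hyx).1 ⟨L, hlen, hx, hy⟩⟩
  · rintro ⟨hxn, h⟩
    obtain ⟨L, hlen, hx, hy⟩ := (exists_runs_iff_le_mul hyx).2 h
    exact ⟨L, List.ne_nil_of_length_pos (by omega), by omega, hx, hy⟩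

theorem le_sub_add_one_mul_iff {n x y : ℕ} (hy : 0 < y) (hx : x ≤ n) :
    x ≤ (n - x + 1) * y ↔
      (¬ y ∣ x ∧ x + x / y ≤ n) ∨ (y ∣ x ∧ x + x / y - 1 ≤ n) := by
  by_cases hd : y ∣ x
  · obtain ⟨q, rfl⟩ := hd
    rw [Nat.mul_div_cancel_left q hy, mul_comm _ y, Nat.mul_le_mul_left_iff hy]
    simp only [dvd_mul_right, not_true_eq_false, false_and, true_and, false_or]
    omega
  · have hne : x ≠ (n - x + 1) * y := fun h => hd ⟨n - x + 1, h.trans (mul_comm _ _)⟩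
    rw [le_iff_lt_or_eq, or_iff_left hne, ← Nat.div_lt_iff_lt_mul hy]
    simp only [hd, not_false_eq_true, true_and, false_and, or_false]
    omega

theorem F_pos_iff (n x y : ℕ) (hy : 1 ≤ y) (hyx : y ≤ x) (hx : x ≤ n) :
    0 < F n x y ↔
      (¬ y ∣ x ∧ x + x / y ≤ n) ∨ (y ∣ x ∧ x + x / y - 1 ≤ n) := by
  have hfin : Finite {s : List Bool // s.length = n ∧ zeros s = x ∧ maxrun s = y} :=
    ((List.finite_length_eq Bool n).subset fun _ hs => hs.1).to_subtype
  rw [F, Nat.card_pos_iff, and_iff_left hfin, nonempty_subtype, exists_bitstring_iff_le_mul hyx,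
    and_iff_right hx, le_sub_add_one_mul_iff hy hx]
end

section
/- For every integer N ≥ 2 there exists a bijection e between the 1-free compositions of N and the pinned solus bitstrings of length N − 1 such that for every 1-free composition c of N: the number of parts of c equals the number of 1s in e(c) plus 1, and the largest part of c equals maxrun(e(c)) plus 1. -/
/-!
A composition with blocks `b₁, …, bₖ` of `N` is sent to the bitstring
`0^(b₁-1) 1 0^(b₂-1) 1 ⋯ 1 0^(bₖ-1)` of length `N - 1`; this is the classical bijection between
compositions of `N` and bitstrings of length `N - 1`, inverted by splitting a bitstring at its 1s.
So there are `k - 1` ones and the runs of 0s have lengths `bᵢ - 1`. A block equal to 1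
is an empty run, which shows up as a leading or trailing 1 or as two adjacent 1s, so the
1-free compositions are exactly the ones sent to pinned solus bitstrings.
-/

theorem List.not_mem_of_mem_splitOn_s13 {α : Type*} [DecidableEq α] {x : α} :
    ∀ {xs l : List α}, l ∈ xs.splitOn x → x ∉ l
  | [], l, hl => by simp_all [List.splitOn_nil]
  | hd :: tl, l, hl => by
    rw [List.splitOn_cons_eq_if_modifyHead] at hl
    split_ifs at hl with hhd
    · rcases List.mem_cons.mp hl with rfl | hl
      · simp
      · exact List.not_mem_of_mem_splitOn_s13 hl
    · obtain ⟨a, rest, hsplit⟩ := List.exists_cons_of_ne_nil (List.splitOn_ne_nil x tl)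
      rw [hsplit, List.modifyHead_cons, List.mem_cons] at hl
      have ha : x ∉ a := List.not_mem_of_mem_splitOn_s13 (hsplit ▸ List.mem_cons_self)
      rcases hl with rfl | hl
      · simp only [beq_iff_eq] at hhd
        simp [Ne.symm hhd, ha]
      · exact List.not_mem_of_mem_splitOn_s13 (hsplit ▸ List.mem_cons_of_mem a hl)

theorem Monotone.foldr_max_map {α β : Type*} [LinearOrder α] [LinearOrder β] {f : α → β}
    (hf : Monotone f) (a : α) (l : List α) : (l.map f).foldr max (f a) = f (l.foldr max a) := by
  induction l with
  | nil => rfl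
  | cons x l ih => simp [ih, hf.map_max]

def bitsOfBlocks (B : List ℕ) : List Bool :=
  [true].intercalate (B.map fun b => List.replicate (b - 1) false)

def blocksOfBits (s : List Bool) : List ℕ :=
  (s.splitOn true).map (·.length + 1)

theorem bitsOfBlocks_singleton (b : ℕ) : bitsOfBlocks [b] = List.replicate (b - 1) false := by
  simp [bitsOfBlocks, List.intercalate]

theorem bitsOfBlocks_cons (b : ℕ) {B : List ℕ} (hB : B ≠ []) :
    bitsOfBlocks (b :: B) = List.replicate (b - 1) false ++ true :: bitsOfBlocks B := by
  obtain ⟨c, B, rfl⟩ := List.exists_cons_of_ne_nil hB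
  simp [bitsOfBlocks, List.intercalate]

theorem splitOn_bitsOfBlocks {B : List ℕ} (hB : B ≠ []) :
    (bitsOfBlocks B).splitOn true = B.map fun b => List.replicate (b - 1) false :=
  List.splitOn_intercalate true (by simp [List.mem_replicate]) (by simpa using hB)

theorem blocksOfBits_bitsOfBlocks {B : List ℕ} (hB : B ≠ []) (hpos : ∀ b ∈ B, 0 < b) :
    blocksOfBits (bitsOfBlocks B) = B := by
  rw [blocksOfBits, splitOn_bitsOfBlocks hB, List.map_map]
  exact List.map_congr_left (fun b hb => by simpa using Nat.sub_add_cancel (hpos b hb)) |>.trans B.map_id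

theorem bitsOfBlocks_blocksOfBits (s : List Bool) : bitsOfBlocks (blocksOfBits s) = s := by
  have hzero : ∀ l ∈ s.splitOn true, List.replicate l.length false = l := fun l hl =>
    (List.eq_replicate_iff.mpr ⟨rfl, fun b hb => by
      cases b
      · rfl
      · exact absurd hb (List.not_mem_of_mem_splitOn_s13 hl)⟩).symm
  conv_rhs => rw [← List.intercalate_splitOn (xs := s) true]
  rw [bitsOfBlocks, blocksOfBits, List.map_map]
  congr 1
  exact List.map_congr_left (fun l hl => by simpa using hzero l hl) |>.trans (List.map_id _)

theorem blocksOfBits_ne_nil (s : List Bool) : blocksOfBits s ≠ [] := by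
  simp [blocksOfBits]

theorem length_bitsOfBlocks_add_one {B : List ℕ} (hB : B ≠ []) (hpos : ∀ b ∈ B, 0 < b) :
    (bitsOfBlocks B).length + 1 = B.sum := by
  induction B with
  | nil => exact absurd rfl hB
  | cons b B ih =>
    have hb := hpos b List.mem_cons_self
    rcases eq_or_ne B [] with rfl | hB'
    · simpa [bitsOfBlocks_singleton] using Nat.sub_add_cancel hb
    · have := ih hB' fun x hx => hpos x (List.mem_cons_of_mem _ hx)
      simp only [bitsOfBlocks_cons b hB', List.length_append, List.length_replicate,
        List.length_cons, List.sum_cons]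
      omega

theorem count_true_bitsOfBlocks_add_one {B : List ℕ} (hB : B ≠ []) :
    (bitsOfBlocks B).count true + 1 = B.length := by
  induction B with
  | nil => exact absurd rfl hB
  | cons b B ih =>
    rcases eq_or_ne B [] with rfl | hB'
    · simp [bitsOfBlocks_singleton, List.count_replicate]
    · simp [bitsOfBlocks_cons b hB', List.count_replicate, ← ih hB']

theorem maxrun_bitsOfBlocks {B : List ℕ} (hB : B ≠ []) :
    maxrun (bitsOfBlocks B) = B.foldr max 0 - 1 := by
  have hmono : Monotone fun b : ℕ => b - 1 := fun _ _ h => Nat.sub_le_sub_right h 1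
  rw [maxrun, splitOn_bitsOfBlocks hB, List.map_map, ← hmono.foldr_max_map 0]
  simp [Function.comp_def]

theorem pinned_replicate_false_iff {m : ℕ} : Pinned (List.replicate m false) ↔ m ≠ 0 := by
  simp [Pinned, List.head?_replicate, List.getLast?_replicate]

theorem solus_replicate_false (m : ℕ) : Solus (List.replicate m false) :=
  List.isChain_replicate_of_rel _ (by simp)

theorem pinned_and_solus_replicate_append_true_cons_iff {m : ℕ} {t : List Bool} :
    Pinned (List.replicate m false ++ true :: t) ∧ Solus (List.replicate m false ++ true :: t) ↔
      m ≠ 0 ∧ Pinned t ∧ Solus t := by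
  cases m with
  | zero => simp [Pinned]
  | succ k =>
    have hsolus : Solus (List.replicate (k + 1) false ++ true :: t) ↔ Solus (true :: t) := by
      simp [solus_iff_isChain, List.isChain_append, List.getLast?_replicate,
        List.isChain_replicate_of_rel]
    rw [Pinned, Pinned, hsolus, List.getLast?_append_of_ne_nil _ (List.cons_ne_nil _ _)]
    rcases t with _ | ⟨_ | _, t⟩ <;> simp [solus_iff_isChain, List.isChain_cons, List.replicate_succ]

theorem pinned_and_solus_bitsOfBlocks_iff {B : List ℕ} (hB : B ≠ []) :
    Pinned (bitsOfBlocks B) ∧ Solus (bitsOfBlocks B) ↔ ∀ b ∈ B, 2 ≤ b := by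
  induction B with
  | nil => exact absurd rfl hB
  | cons b B ih =>
    rcases eq_or_ne B [] with rfl | hB'
    · simpa [bitsOfBlocks_singleton, pinned_replicate_false_iff, solus_replicate_false] using
        (by omega : b - 1 ≠ 0 ↔ 2 ≤ b)
    · rw [bitsOfBlocks_cons b hB', pinned_and_solus_replicate_append_true_cons_iff, ih hB',
        List.forall_mem_cons]
      exact and_congr_left' (by omega)

def Composition.equivBoolList (N : ℕ) (hN : 0 < N) :
    Composition N ≃ {s : List Bool // s.length = N - 1} where
  toFun c := ⟨bitsOfBlocks c.blocks, by
    have := length_bitsOfBlocks_add_one (c.blocks_eq_nil.not.mpr hN.ne') fun _ => c.blocks_pos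
    rw [c.blocks_sum] at this
    omega⟩
  invFun s := {
    blocks := blocksOfBits s.1
    blocks_pos := fun hb => by
      obtain ⟨l, -, rfl⟩ := List.mem_map.mp hb
      omega
    blocks_sum := by
      have := length_bitsOfBlocks_add_one (blocksOfBits_ne_nil s.1) fun b hb => by
        obtain ⟨l, -, rfl⟩ := List.mem_map.mp hb
        omega
      rw [bitsOfBlocks_blocksOfBits, s.2] at this
      omega }
  left_inv c := Composition.ext <|
    blocksOfBits_bitsOfBlocks (c.blocks_eq_nil.not.mpr hN.ne') fun _ => c.blocks_pos
  right_inv s := Subtype.ext (bitsOfBlocks_blocksOfBits s.1)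

theorem oneFree_composition_pinnedSolus_equiv (N : ℕ) (hN : 2 ≤ N) :
    ∃ e : {c : Composition N // ∀ p ∈ c.blocks, 2 ≤ p} ≃
          {s : List Bool // s.length = N - 1 ∧ Pinned s ∧ Solus s},
      ∀ c : {c : Composition N // ∀ p ∈ c.blocks, 2 ≤ p},
        (c : Composition N).length = ((e c : List Bool)).count true + 1 ∧
        (c : Composition N).blocks.foldr max 0 = maxrun (e c : List Bool) + 1 := by
  have hblocks (c : Composition N) : c.blocks ≠ [] := c.blocks_eq_nil.not.mpr (by omega)
  refine ⟨((Composition.equivBoolList N (by omega)).subtypeEquiv fun c =>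
    (pinned_and_solus_bitsOfBlocks_iff (hblocks c)).symm).trans
    (Equiv.subtypeSubtypeEquivSubtypeInter _ _), fun ⟨c, hc⟩ => ?_⟩
  show c.length = (bitsOfBlocks c.blocks).count true + 1 ∧
    c.blocks.foldr max 0 = maxrun (bitsOfBlocks c.blocks) + 1
  obtain ⟨b, hb⟩ := List.exists_mem_of_ne_nil _ (hblocks c)
  have hmax : 2 ≤ c.blocks.foldr max 0 := List.le_max_of_le hb (hc b hb)
  rw [count_true_bitsOfBlocks_add_one (hblocks c), maxrun_bitsOfBlocks (hblocks c)]
  exact ⟨rfl, by omega⟩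
end

section
/- For every integer k ≥ 1, let B_k(n) denote the number of bitstrings of length n whose maxrun is strictly less than k (with B_k(0) = 1 for the empty string). Then in the ring of formal power series over ℤ, (Σ_{n≥0} B_k(n) z^n) · (1 − 2z + z^{k+1}) = 1 − z^k. -/
/-- `B k n` is the number of bitstrings of length `n` whose longest run of 0s is
strictly less than `k` (so `B k 0 = 1`, counting the empty string). -/
noncomputable def B (k n : ℕ) : ℕ :=
  Nat.card {s : List Bool // s.length = n ∧ maxrun s < k}

section

open List

def leadrun (s : List Bool) : ℕ := (s.takeWhile (· == false)).length

@[simp] lemma leadrun_replicate (n : ℕ) : leadrun (replicate n false) = n := by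
  induction n with
  | zero => rfl
  | succ n ih => simp_all [leadrun, replicate_succ]

@[simp] lemma leadrun_replicate_append (j : ℕ) (t : List Bool) :
    leadrun (replicate j false ++ true :: t) = j := by
  induction j with
  | zero => simp [leadrun]
  | succ j ih => simp_all [leadrun, replicate_succ]

@[simp] lemma maxrun_replicate (n : ℕ) : maxrun (replicate n false) = n := by
  simp [maxrun, splitOn_eq_singleton]

@[simp] lemma maxrun_replicate_append (j : ℕ) (t : List Bool) :
    maxrun (replicate j false ++ true :: t) = max j (maxrun t) := by
  simp [maxrun, splitOn_append_cons_self_of_not_mem]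

lemma eq_replicate_or_eq_replicate_append (s : List Bool) :
    (∃ n, s = replicate n false) ∨ ∃ j t, s = replicate j false ++ true :: t := by
  induction s with
  | nil => exact .inl ⟨0, rfl⟩
  | cons b s ih =>
    cases b
    · obtain ⟨n, rfl⟩ | ⟨j, t, rfl⟩ := ih
      · exact .inl ⟨n + 1, rfl⟩
      · exact .inr ⟨j + 1, t, rfl⟩
    · exact .inr ⟨0, s, rfl⟩

lemma leadrun_le_length (s : List Bool) : leadrun s ≤ s.length :=
  (takeWhile_prefix _).length_le

lemma leadrun_le_maxrun (s : List Bool) : leadrun s ≤ maxrun s := by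
  obtain ⟨n, rfl⟩ | ⟨j, t, rfl⟩ := eq_replicate_or_eq_replicate_append s <;> simp

lemma maxrun_cons_true (s : List Bool) : maxrun (true :: s) = maxrun s := by
  simpa using maxrun_replicate_append 0 s

lemma maxrun_cons_false (s : List Bool) :
    maxrun (false :: s) = max (leadrun s + 1) (maxrun s) := by
  obtain ⟨n, rfl⟩ | ⟨j, t, rfl⟩ := eq_replicate_or_eq_replicate_append s
  · rw [← replicate_succ]; simp
  · rw [← cons_append, ← replicate_succ, maxrun_replicate_append, maxrun_replicate_append,
      leadrun_replicate_append]
    omega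

lemma maxrun_cons_lt_iff (b : Bool) (s : List Bool) (k : ℕ) :
    maxrun (b :: s) < k ↔ maxrun s < k ∧ (b = false → leadrun s + 1 < k) := by
  cases b <;> simp [maxrun_cons_true, maxrun_cons_false, and_comm]

lemma maxrun_le_maxrun_cons (b : Bool) (s : List Bool) : maxrun s ≤ maxrun (b :: s) := by
  cases b <;> simp [maxrun_cons_true, maxrun_cons_false]

lemma maxrun_drop_le (i : ℕ) (s : List Bool) : maxrun (s.drop i) ≤ maxrun s := by
  induction s generalizing i with
  | nil => simp
  | cons b s ih =>
    cases i with
    | zero => rfl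
    | succ i => exact (ih i).trans (maxrun_le_maxrun_cons b s)

lemma replicate_leadrun_append_drop {s : List Bool} (h : leadrun s < s.length) :
    replicate (leadrun s) false ++ true :: s.drop (leadrun s + 1) = s := by
  obtain ⟨n, rfl⟩ | ⟨j, t, rfl⟩ := eq_replicate_or_eq_replicate_append s
  · simp at h
  · simp [drop_append]

abbrev RunBounded (k n : ℕ) := {s : List Bool // s.length = n ∧ maxrun s < k}

namespace RunBounded

instance (k n : ℕ) : Finite (RunBounded k n) :=
  ((finite_length_eq Bool n).subset fun _ hs => hs.1).to_subtype

def consEquiv (k n : ℕ) :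
    RunBounded k (n + 1) ⊕ {s : RunBounded k n // leadrun s.1 + 1 = k} ≃
      Bool × RunBounded k n where
  toFun
    | .inl s => (s.1.headI, ⟨s.1.tail, by simp [s.2.1], by
        obtain ⟨_ | ⟨b, t⟩, hlen, hmax⟩ := s
        · simp at hlen
        · exact ((maxrun_cons_lt_iff b t k).1 hmax).1⟩)
    | .inr s => (false, s.1)
  invFun p :=
    if h : p.1 = false ∧ leadrun p.2.1 + 1 = k then .inr ⟨p.2, h.2⟩
    else .inl ⟨p.1 :: p.2.1, by simp [p.2.2.1], (maxrun_cons_lt_iff _ _ _).2 ⟨p.2.2.2, fun hb => by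
      have hlt := (leadrun_le_maxrun p.2.1).trans_lt p.2.2.2
      have hne : leadrun p.2.1 + 1 ≠ k := fun hk => h ⟨hb, hk⟩
      omega⟩⟩
  left_inv := by
    rintro (⟨_ | ⟨b, t⟩, hlen, hmax⟩ | ⟨s, hs⟩)
    · simp at hlen
    · have hcons := (maxrun_cons_lt_iff b t k).1 hmax
      have : ¬ (b = false ∧ leadrun t + 1 = k) := fun h => by have := hcons.2 h.1; omega
      simp [this]
    · simp [hs]
  right_inv := by
    rintro ⟨b, s⟩
    by_cases h : b = false ∧ leadrun s.1 + 1 = k <;> simp [h]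

def replicateAppendEquiv (j m : ℕ) :
    RunBounded (j + 1) m ≃ {s : RunBounded (j + 1) (m + (j + 1)) // leadrun s.1 = j} where
  toFun t := ⟨⟨replicate j false ++ true :: t.1, by simp [t.2.1]; omega, by simpa using t.2.2⟩,
    by simp⟩
  invFun s := ⟨s.1.1.drop (j + 1), by simp [s.1.2.1], (maxrun_drop_le _ _).trans_lt s.1.2.2⟩
  left_inv t := Subtype.ext (by simp [drop_append])
  right_inv := by
    rintro ⟨⟨s, hlen, -⟩, hlead : leadrun s = j⟩
    refine Subtype.ext (Subtype.ext ?_)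
    simpa [hlead] using replicate_leadrun_append_drop (s := s) (by omega)

end RunBounded

lemma B_succ_add_card_leadrun (j n : ℕ) :
    B (j + 1) (n + 1) + Nat.card {s : RunBounded (j + 1) n // leadrun s.1 = j} =
      2 * B (j + 1) n := by
  have := Nat.card_congr (RunBounded.consEquiv (j + 1) n)
  simp only [Nat.add_right_cancel_iff] at this
  rwa [Nat.card_sum, Nat.card_prod, Nat.card_eq_fintype_card (α := Bool), Fintype.card_bool]
    at this

lemma B_zero {k : ℕ} (hk : 0 < k) : B k 0 = 1 :=
  Nat.card_eq_one_iff_exists.2 ⟨⟨[], rfl, by simpa [maxrun]⟩, fun s =>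
    Subtype.ext (eq_nil_of_length_eq_zero s.2.1)⟩

lemma card_leadrun_eq_zero_of_lt {j n : ℕ} (h : n < j) :
    Nat.card {s : RunBounded (j + 1) n // leadrun s.1 = j} = 0 := by
  have : IsEmpty {s : RunBounded (j + 1) n // leadrun s.1 = j} :=
    ⟨fun s => by have := leadrun_le_length s.1.1; have := s.1.2.1; omega⟩
  exact Nat.card_of_isEmpty

lemma card_leadrun_self (j : ℕ) :
    Nat.card {s : RunBounded (j + 1) j // leadrun s.1 = j} = 1 := by
  refine Nat.card_eq_one_iff_exists.2
    ⟨⟨⟨replicate j false, by simp, by simp⟩, by simp⟩, fun ⟨⟨s, hlen, _⟩, hlead⟩ => ?_⟩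
  obtain ⟨n, rfl⟩ | ⟨i, t, rfl⟩ := eq_replicate_or_eq_replicate_append s
  · simpa using hlen
  · simp only [length_append, length_replicate, length_cons, leadrun_replicate_append]
      at hlen hlead
    omega

lemma card_leadrun_add (j m : ℕ) :
    Nat.card {s : RunBounded (j + 1) (m + (j + 1)) // leadrun s.1 = j} = B (j + 1) m :=
  (Nat.card_congr (RunBounded.replicateAppendEquiv j m)).symm

end

open PowerSeries in
lemma coeff_succ_mul_one_sub_two_X_add_X_pow {R : Type*} [CommRing R] (f : R⟦X⟧) (k n : ℕ) :
    coeff (n + 1) (f * (1 - 2 * X + X ^ (k + 1))) =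
      coeff (n + 1) f - 2 * coeff n f + if k ≤ n then coeff (n - k) f else 0 := by
  rw [show f * (1 - 2 * X + X ^ (k + 1)) = f - 2 * (f * X) + f * X ^ (k + 1) by ring]
  simp [two_mul, coeff_succ_mul_X, coeff_mul_X_pow']

open PowerSeries in
theorem B_generating_function (k : ℕ) (hk : 1 ≤ k) :
    (PowerSeries.mk fun n => (B k n : ℤ)) * (1 - 2 * X + X ^ (k + 1))
      = 1 - X ^ k := by
  obtain ⟨j, rfl⟩ := Nat.exists_eq_add_of_le' hk
  ext (_ | n)
  · simp [B_zero]
  rw [coeff_succ_mul_one_sub_two_X_add_X_pow]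
  simp only [coeff_mk, map_sub, coeff_one, coeff_X_pow, Nat.add_eq_zero_iff, one_ne_zero,
    and_false, if_false, Nat.add_right_cancel_iff]
  have hrec := B_succ_add_card_leadrun j n
  rcases lt_trichotomy n j with hlt | rfl | hgt
  · rw [card_leadrun_eq_zero_of_lt hlt] at hrec
    split_ifs <;> omega
  · rw [card_leadrun_self] at hrec
    split_ifs <;> omega
  · obtain ⟨m, rfl⟩ : ∃ m, n = m + (j + 1) := ⟨n - (j + 1), by omega⟩
    rw [card_leadrun_add] at hrec
    rw [Nat.add_sub_cancel]
    split_ifs <;> omega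
end

section
/- For every integer k ≥ 1, let C_k(n) denote the number of pinned solus bitstrings of length n whose maxrun is strictly less than k, with the convention C_k(0) = 1 (the empty string is counted). Then in the ring of formal power series over ℤ, (Σ_{n≥0} C_k(n) z^n) · (1 − z − z² + z^{k+1}) = 1 − z² − z^k + z^{k+1}. -/
/-- `C k n` is the number of pinned solus bitstrings of length `n` whose longest
run of 0s is strictly less than `k`, with the convention `C k 0 = 1`. -/
noncomputable def C (k n : ℕ) : ℕ :=
  if n = 0 then 1 else
    Nat.card {s : List Bool // s.length = n ∧ Pinned s ∧ Solus s ∧ maxrun s < k}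

/-!
Call a bitstring admissible if it is pinned, solus and has maxrun < k. Cutting an admissible
string just before its first 1 shows that it is either 0^a, or 0^a 1 t with t admissible, where
1 ≤ a < k in both cases. So, with G = z + ⋯ + z^(k-1), the series P counting the nonempty
admissible strings satisfies P = G + zGP. As (1 - z)G = z - z^k, multiplying by 1 - z gives
P Q = z - z^k for Q = 1 - z - z² + z^(k+1), and adding Q for the empty string gives the claim.
-/

open List

theorem maxrun_replicate_false (a : ℕ) : maxrun (replicate a false) = a := by
  unfold maxrun
  rw [splitOn, splitOnP_eq_singleton fun x hx => by simp [eq_of_mem_replicate hx]]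
  simp

theorem maxrun_replicate_false_append_true_cons (a : ℕ) (t : List Bool) :
    maxrun (replicate a false ++ true :: t) = max a (maxrun t) := by
  unfold maxrun
  rw [splitOn, splitOnP_append_cons_of_forall_mem (fun x hx => by simp [eq_of_mem_replicate hx])
    _ rfl]
  simp [splitOn]

theorem solus_iff {s : List Bool} : Solus s ↔ IsChain (fun a b => ¬(a = true ∧ b = true)) s :=
  Iff.rfl

theorem solus_replicate_false_s19 (a : ℕ) : Solus (replicate a false) :=
  isChain_replicate_of_rel a (by simp)

theorem pinned_replicate_false_iff_s19 {a : ℕ} : Pinned (replicate a false) ↔ 1 ≤ a := by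
  cases a <;> simp [Pinned, head?_replicate, getLast?_replicate]

theorem pinned_replicate_false_append_true_cons_iff {a : ℕ} {t : List Bool} :
    Pinned (replicate a false ++ true :: t) ↔
      1 ≤ a ∧ t ≠ [] ∧ t.getLast? = some false := by
  cases a <;> cases t <;> simp [Pinned, getLast?_append, getLast?_cons, replicate_succ]

theorem solus_replicate_false_append_true_cons_iff {a : ℕ} {t : List Bool} :
    Solus (replicate a false ++ true :: t) ↔ Solus t ∧ t.head? ≠ some true := by
  rw [solus_iff, isChain_append, isChain_cons, ← solus_iff, ← solus_iff]
  simp [solus_replicate_false_s19, getLast?_replicate, and_comm]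

theorem eq_replicate_false_or_eq_replicate_false_append_true_cons (s : List Bool) :
    s = replicate s.length false ∨ ∃ a t, s = replicate a false ++ true :: t := by
  induction s with
  | nil => simp
  | cons b s ih =>
    cases b
    · rcases ih with h | ⟨a, t, h⟩
      · exact .inl (by rw [length_cons, replicate_succ, ← h])
      · exact .inr ⟨a + 1, t, by rw [h, replicate_succ, cons_append]⟩
    · exact .inr ⟨0, s, rfl⟩

theorem replicate_false_append_true_cons_inj {a a' : ℕ} {t t' : List Bool}
    (h : replicate a false ++ true :: t = replicate a' false ++ true :: t') :
    a = a' ∧ t = t' := by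
  induction a generalizing a' with
  | zero => cases a' <;> simp_all [replicate_succ]
  | succ a ih => cases a' <;> simp_all [replicate_succ]

def Admissible (k : ℕ) (s : List Bool) : Prop := Pinned s ∧ Solus s ∧ maxrun s < k

theorem admissible_replicate_false_iff {k a : ℕ} :
    Admissible k (replicate a false) ↔ a ∈ Finset.Ico 1 k := by
  simp [Admissible, pinned_replicate_false_iff_s19, solus_replicate_false_s19, maxrun_replicate_false]

theorem admissible_replicate_false_append_true_cons_iff {k a : ℕ} {t : List Bool} :
    Admissible k (replicate a false ++ true :: t) ↔ a ∈ Finset.Ico 1 k ∧ Admissible k t := by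
  rw [Admissible, Admissible, pinned_replicate_false_append_true_cons_iff,
    solus_replicate_false_append_true_cons_iff, maxrun_replicate_false_append_true_cons]
  rcases t with _ | ⟨_ | _, t⟩ <;> simp [Pinned, and_assoc, and_left_comm]

theorem Admissible.length_pos {k : ℕ} {s : List Bool} (h : Admissible k s) : 0 < s.length :=
  length_pos_iff.2 h.1.1

abbrev AdmissibleOfLength (k n : ℕ) : Type := {s : List Bool // s.length = n ∧ Admissible k s}

instance (k n : ℕ) : Finite (AdmissibleOfLength k n) :=
  Finite.of_injective (β := List.Vector Bool n) (fun s => ⟨s.1, s.2.1⟩)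
    fun _ _ h => Subtype.ext (congrArg List.Vector.toList h)

-- For `a + 1 > n` the truncated `n - (a + 1)` is `0`: harmless, admissible strings are nonempty.
def blockDecomposition (k n : ℕ) :
    PLift (n ∈ Finset.Ico 1 k) ⊕ (Σ a : Finset.Ico 1 k, AdmissibleOfLength k (n - (a + 1))) →
      AdmissibleOfLength k n
  | .inl h => ⟨replicate n false, length_replicate, admissible_replicate_false_iff.2 h.down⟩
  | .inr ⟨a, t⟩ => ⟨replicate a false ++ true :: t, by
      have := t.2.2.length_pos
      simp only [length_append, length_replicate, length_cons, t.2.1]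
      omega, admissible_replicate_false_append_true_cons_iff.2 ⟨a.2, t.2.2⟩⟩

theorem blockDecomposition_bijective (k n : ℕ) : Function.Bijective (blockDecomposition k n) := by
  constructor
  · rintro (h | ⟨a, t⟩) (h' | ⟨a', t'⟩) hst <;>
      simp only [blockDecomposition, Subtype.mk.injEq] at hst
    · exact congrArg Sum.inl (Subsingleton.elim _ _)
    · exact absurd (hst ▸ mem_append_right _ mem_cons_self) (by simp)
    · exact absurd (hst ▸ mem_append_right _ mem_cons_self) (by simp)
    · obtain ⟨ha, ht⟩ := replicate_false_append_true_cons_inj hst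
      obtain rfl := Subtype.ext ha
      obtain rfl := Subtype.ext ht
      rfl
  · rintro ⟨s, rfl, hs⟩
    rcases eq_replicate_false_or_eq_replicate_false_append_true_cons s with h | ⟨a, t, rfl⟩
    · exact ⟨.inl ⟨admissible_replicate_false_iff.1 (h ▸ hs)⟩, Subtype.ext h.symm⟩
    · obtain ⟨ha, ht⟩ := admissible_replicate_false_append_true_cons_iff.1 hs
      exact ⟨.inr ⟨⟨a, ha⟩, t, by simp; omega, ht⟩, rfl⟩

theorem card_admissibleOfLength (k n : ℕ) :
    Nat.card (AdmissibleOfLength k n) = (if n ∈ Finset.Ico 1 k then 1 else 0) +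
      ∑ a ∈ Finset.Ico 1 k, Nat.card (AdmissibleOfLength k (n - (a + 1))) := by
  rw [← Nat.card_congr (Equiv.ofBijective _ (blockDecomposition_bijective k n)), Nat.card_sum,
    Nat.card_sigma,
    Finset.sum_coe_sort (Finset.Ico 1 k) fun a => Nat.card (AdmissibleOfLength k (n - (a + 1)))]
  split_ifs <;> simp [*]

theorem C_eq_card_admissibleOfLength (k : ℕ) {n : ℕ} (hn : n ≠ 0) :
    C k n = Nat.card (AdmissibleOfLength k n) :=
  if_neg hn

theorem card_admissibleOfLength_zero (k : ℕ) : Nat.card (AdmissibleOfLength k 0) = 0 :=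
  Nat.card_eq_zero.2 <| .inl ⟨fun s => (s.2.2.length_pos.trans_eq s.2.1).false⟩

section GeneratingFunction

open PowerSeries

noncomputable def admissibleSeries (R : Type*) [Semiring R] (k : ℕ) : R⟦X⟧ :=
  mk fun n => (Nat.card (AdmissibleOfLength k n) : R)

theorem admissibleSeries_eq (R : Type*) [CommRing R] (k : ℕ) :
    admissibleSeries R k = ∑ a ∈ Finset.Ico 1 k, X ^ a +
      X * (∑ a ∈ Finset.Ico 1 k, X ^ a) * admissibleSeries R k := by
  ext n
  rw [Finset.mul_sum, Finset.sum_mul]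
  simp only [← pow_succ', map_add, map_sum, coeff_X_pow, coeff_X_pow_mul', admissibleSeries,
    coeff_mk, card_admissibleOfLength k n]
  push_cast [Finset.sum_ite_eq]
  congr 1
  refine Finset.sum_congr rfl fun a _ => ?_
  split_ifs with h
  · rfl
  · rw [Nat.sub_eq_zero_of_le (by omega), card_admissibleOfLength_zero, Nat.cast_zero]

end GeneratingFunction

open PowerSeries in
theorem C_generating_function (k : ℕ) (hk : 1 ≤ k) :
    (PowerSeries.mk fun n => (C k n : ℤ)) * (1 - X - X ^ 2 + X ^ (k + 1))
      = 1 - X ^ 2 - X ^ k + X ^ (k + 1) := by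
  have hC : (PowerSeries.mk fun n => (C k n : ℤ)) = 1 + admissibleSeries ℤ k := by
    ext (_ | n)
    · simp [_root_.C, admissibleSeries, card_admissibleOfLength_zero]
    · simp [C_eq_card_admissibleOfLength k n.succ_ne_zero, admissibleSeries, coeff_one]
  have hG := geom_sum_Ico_mul (X : ℤ⟦X⟧) hk
  rw [hC]
  linear_combination (1 - X) * admissibleSeries_eq ℤ k - (1 + X * admissibleSeries ℤ k) * hG
end
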